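/- Let m ≥ 1, let B : Matrix (Fin m) (Fin m) (ZMod 2) be symmetric, and let Q : (Fin m → ZMod 2) → ZMod 4 be the associated Z_4-valued quadratic form Q(x) = ∑ j, ((B j j * x j).val : ZMod 4) + 2 * ∑_{j<k} ((B j k * x j * x k).val : ZMod 4). Then for every c : Fin m → ZMod 2, every ε : ZMod 4, and every u : Fin m → ZMod 2, the function f(x) = Q(x) + 2 * ((∑ j, c j * x j).val : ZMod 4) + ε satisfies Complex.normSq (f̂(u)) ≤ 2^(2m − B.rank). That is, the PAPR of the entire coset Q + ZRM(1,m) is at most 2^{m − rk(Q)}. -/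

import Mathlib

/-!
Squaring the Fourier coefficient and substituting `y = x + z` writes `|f̂(u)|²` as
`∑_z ω(z) ∑_x (-1)^{(Bz)·x}` with `|ω(z)| = 1`: for symmetric `B` the polarization
`Q(x + z) = Q(x) + Q(z) + 2 (Bz)·x` makes `f(x + z) - f(x)` depend on `x` only through
`2 (Bz)·x`. The inner sum is `2^m` on `ker B` and `0` off it, so
`|f̂(u)|² ≤ 2^m · |ker B| = 2^m · 2^{m - rk B}`.
-/

/-- The Fourier transform of a `ZMod 4`-valued generalized Boolean function. -/
noncomputable def fourier4 {m : ℕ} (f : (Fin m → ZMod 2) → ZMod 4) (u : Fin m → ZMod 2) : ℂ :=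
  ∑ x : Fin m → ZMod 2, Complex.I ^ (f x).val * (-1 : ℂ) ^ (∑ j, u j * x j).val

/-- The `ZMod 4`-valued quadratic form `Q(x) = x B xᵀ = ∑_j b_{jj} x_j + 2 ∑_{j<k} b_{jk} x_j x_k`
associated with a symmetric binary matrix `B`. -/
def quadForm {m : ℕ} (B : Matrix (Fin m) (Fin m) (ZMod 2)) (x : Fin m → ZMod 2) : ZMod 4 :=
  ∑ j, ((B j j * x j).val : ZMod 4) +
    2 * ∑ p ∈ Finset.univ.filter (fun p : Fin m × Fin m => p.1 < p.2),
      ((B p.1 p.2 * x p.1 * x p.2).val : ZMod 4)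

open Finset Matrix

lemma Finset.sum_prod_eq_sum_diag_add_sum_lt {ι M : Type*} [Fintype ι] [LinearOrder ι]
    [AddCommMonoid M] (g : ι → ι → M) :
    ∑ p : ι × ι, g p.1 p.2 =
      ∑ j, g j j + ∑ p ∈ univ.filter (fun p : ι × ι => p.1 < p.2), (g p.1 p.2 + g p.2 p.1) := by
  have hgt : ∑ p ∈ univ.filter (fun p : ι × ι => ¬p.1 < p.2 ∧ p.2 < p.1), g p.1 p.2 =
      ∑ p ∈ univ.filter (fun p : ι × ι => p.1 < p.2), g p.2 p.1 :=
    sum_equiv (Equiv.prodComm ι ι) (fun p => by simpa using le_of_lt) (by simp)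
  have hdiag : ∑ p ∈ univ.filter (fun p : ι × ι => ¬p.1 < p.2 ∧ ¬p.2 < p.1), g p.1 p.2 =
      ∑ j, g j j := by
    rw [← sum_diag univ fun p : ι × ι => g p.1 p.2]
    congr 1
    ext p
    simp [le_antisymm_iff, and_comm]
  rw [sum_add_distrib, ← hgt, ← hdiag,
    ← sum_filter_add_sum_filter_not univ (fun p : ι × ι => p.1 < p.2),
    ← sum_filter_add_sum_filter_not (univ.filter fun p : ι × ι => ¬p.1 < p.2)
      (fun p => p.2 < p.1),
    filter_filter, filter_filter]
  abel

def lift4 (a : ZMod 2) : ZMod 4 := a.val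

-- `lift4` is not additive, but doubling kills the carry `2ab` in `lift4 (a + b)`.
def twiceLift : ZMod 2 →+ ZMod 4 where
  toFun a := 2 * lift4 a
  map_zero' := rfl
  map_add' := by decide

noncomputable def iChar : AddChar (ZMod 4) ℂ := AddChar.zmodChar 4 Complex.I_pow_four

noncomputable def signChar : AddChar (ZMod 2) ℂ := AddChar.zmodChar 2 neg_one_sq

lemma iChar_twiceLift (a : ZMod 2) : iChar (twiceLift a) = signChar a := by
  simp only [iChar, signChar, AddChar.zmodChar_apply]
  fin_cases a
  · rfl
  · show Complex.I ^ 2 = (-1) ^ 1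
    simp

lemma fourier4_eq_sum_iChar {m : ℕ} (f : (Fin m → ZMod 2) → ZMod 4) (u : Fin m → ZMod 2) :
    fourier4 f u = ∑ x, iChar (f x + twiceLift (u ⬝ᵥ x)) := by
  simp only [AddChar.map_add_eq_mul, iChar_twiceLift]
  rfl

lemma sum_signChar_dotProduct {n : Type*} [Fintype n] [DecidableEq n] (v : n → ZMod 2) :
    ∑ x : n → ZMod 2, signChar (v ⬝ᵥ x) = if v = 0 then 2 ^ Fintype.card n else 0 := by
  let ψ : AddChar (n → ZMod 2) ℂ :=
    signChar.compAddMonoidHom (dotProductEquiv (ZMod 2) n v).toAddMonoidHom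
  have hψ : ψ = 0 ↔ v = 0 := by
    refine ⟨fun h => ?_, fun h => ?_⟩
    · by_contra hv
      obtain ⟨j, hj⟩ := Function.ne_iff.mp hv
      have h1 : v j = 1 := (by decide : ∀ a : ZMod 2, a ≠ 0 → a = 1) _ hj
      have := DFunLike.congr_fun h (Pi.single j 1)
      have hsign : signChar 1 = -1 := by simp [signChar, AddChar.zmodChar_apply, ZMod.val_one]
      norm_num [ψ, dotProduct_single, h1, hsign] at this
    · ext x; simp [ψ, h]
  change ∑ x, ψ x = _
  simp [ψ.sum_eq_ite, hψ]

section Differencing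

variable {n : Type*} [Fintype n] [DecidableEq n] (F G : (n → ZMod 2) → ZMod 4)
  (A : Matrix n n (ZMod 2))

lemma normSq_sum_iChar_eq (hF : ∀ x z, F (x + z) = F x + G z + twiceLift (A *ᵥ z ⬝ᵥ x)) :
    (Complex.normSq (∑ x, iChar (F x)) : ℂ) =
      ∑ z, iChar (G z) * ∑ x, signChar (A *ᵥ z ⬝ᵥ x) := by
  have hpair : ∀ x z, starRingEnd ℂ (iChar (F x)) * iChar (F (x + z)) =
      iChar (G z) * signChar (A *ᵥ z ⬝ᵥ x) := by
    intro x z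
    rw [← AddChar.map_neg_eq_conj, ← AddChar.map_add_eq_mul, hF, add_assoc, neg_add_cancel_left,
      AddChar.map_add_eq_mul, iChar_twiceLift]
  rw [Complex.normSq_eq_conj_mul_self, map_sum, sum_mul_sum]
  calc ∑ x, ∑ y, starRingEnd ℂ (iChar (F x)) * iChar (F y)
      = ∑ x, ∑ z, starRingEnd ℂ (iChar (F x)) * iChar (F (x + z)) :=
        sum_congr rfl fun x _ => (Equiv.sum_comp (Equiv.addLeft x) _).symm
    _ = ∑ z, iChar (G z) * ∑ x, signChar (A *ᵥ z ⬝ᵥ x) := by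
        simp_rw [hpair, mul_sum]
        exact sum_comm

lemma normSq_sum_iChar_le (hF : ∀ x z, F (x + z) = F x + G z + twiceLift (A *ᵥ z ⬝ᵥ x)) :
    Complex.normSq (∑ x, iChar (F x)) ≤ 2 ^ Fintype.card n * #{z | A *ᵥ z = 0} := by
  calc Complex.normSq (∑ x, iChar (F x))
      = ‖(Complex.normSq (∑ x, iChar (F x)) : ℂ)‖ := by
        rw [Complex.norm_real, Real.norm_of_nonneg (Complex.normSq_nonneg _)]
    _ ≤ ∑ z, ‖iChar (G z) * ∑ x, signChar (A *ᵥ z ⬝ᵥ x)‖ := by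
        rw [normSq_sum_iChar_eq F G A hF]; exact norm_sum_le _ _
    _ = ∑ z, if A *ᵥ z = 0 then (2 : ℝ) ^ Fintype.card n else 0 := by
        refine sum_congr rfl fun z _ => ?_
        rw [norm_mul, AddChar.norm_apply, one_mul, sum_signChar_dotProduct]
        split_ifs <;> simp
    _ = 2 ^ Fintype.card n * #{z | A *ᵥ z = 0} := by
        rw [← sum_filter, sum_const, nsmul_eq_mul, mul_comm]

end Differencing

lemma card_filter_mulVec_eq_zero {K m n : Type*} [Field K] [Fintype K] [DecidableEq K]
    [Fintype m] [Fintype n] [DecidableEq n] (A : Matrix m n K) :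
    #{z | A *ᵥ z = 0} = Fintype.card K ^ (Fintype.card n - A.rank) := by
  have hker : #{z | A *ᵥ z = 0} = Nat.card (LinearMap.ker A.mulVecLin) := by
    rw [← Fintype.card_subtype, ← Nat.card_eq_fintype_card]
    exact Nat.card_congr (Equiv.subtypeEquivRight fun z => by simp)
  have hnullity := LinearMap.finrank_range_add_finrank_ker A.mulVecLin
  rw [Module.finrank_fintype_fun_eq_card] at hnullity
  rw [hker, Module.natCard_eq_pow_finrank (K := K), Nat.card_eq_fintype_card (α := K),
    Matrix.rank]
  congr 1
  omega

section QuadraticForm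

variable {m : ℕ} (B : Matrix (Fin m) (Fin m) (ZMod 2))

lemma quadForm_eq_sum_twiceLift (x : Fin m → ZMod 2) :
    quadForm B x = ∑ j, lift4 (B j j * x j) +
      ∑ p ∈ univ.filter (fun p : Fin m × Fin m => p.1 < p.2),
        twiceLift (B p.1 p.2 * x p.1 * x p.2) := by
  rw [quadForm, mul_sum]
  rfl

lemma quadForm_add (hB : Bᵀ = B) (x z : Fin m → ZMod 2) :
    quadForm B (x + z) = quadForm B x + quadForm B z + twiceLift (B *ᵥ z ⬝ᵥ x) := by
  have hdiag : ∀ d a b : ZMod 2,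
      lift4 (d * (a + b)) = lift4 (d * a) + lift4 (d * b) + twiceLift (d * a * b) := by
    decide
  have hoff : ∀ b x₁ x₂ z₁ z₂ : ZMod 2, twiceLift (b * (x₁ + z₁) * (x₂ + z₂)) =
      twiceLift (b * x₁ * x₂) + twiceLift (b * z₁ * z₂) +
        twiceLift (b * x₁ * z₂ + b * z₁ * x₂) := by
    intro b x₁ x₂ z₁ z₂
    rw [← map_add, ← map_add]
    congr 1
    ring
  have hcross : B *ᵥ z ⬝ᵥ x = ∑ j, B j j * x j * z j +
      ∑ p ∈ univ.filter (fun p : Fin m × Fin m => p.1 < p.2),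
        (B p.1 p.2 * x p.1 * z p.2 + B p.1 p.2 * z p.1 * x p.2) := by
    have hsymm : ∀ j k, B k j = B j k := fun j k => congrFun (congrFun hB j) k
    calc B *ᵥ z ⬝ᵥ x = ∑ p : Fin m × Fin m, B p.1 p.2 * x p.1 * z p.2 := by
          simp only [Fintype.sum_prod_type, dotProduct, mulVec, sum_mul]
          exact sum_congr rfl fun j _ => sum_congr rfl fun k _ => by ring
      _ = _ := by
          rw [sum_prod_eq_sum_diag_add_sum_lt fun j k => B j k * x j * z k]
          exact congrArg _ (sum_congr rfl fun p _ => by rw [hsymm]; ring)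
  simp only [quadForm_eq_sum_twiceLift, Pi.add_apply, hdiag, hoff, hcross, map_add, map_sum,
    sum_add_distrib]
  abel

end QuadraticForm

theorem stmt14_general (m : ℕ) (B : Matrix (Fin m) (Fin m) (ZMod 2))
    (hB : B.transpose = B) :
    ∀ (c : Fin m → ZMod 2) (ε : ZMod 4) (u : Fin m → ZMod 2),
      Complex.normSq
          (fourier4 (fun x => quadForm B x + 2 * ((∑ j, c j * x j).val : ZMod 4) + ε) u)
        ≤ 2 ^ (2 * m - B.rank) := by
  intro c ε u
  change Complex.normSq (fourier4 (fun x => quadForm B x + twiceLift (c ⬝ᵥ x) + ε) u) ≤ _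
  rw [fourier4_eq_sum_iChar]
  refine (normSq_sum_iChar_le _
    (fun z => quadForm B z + twiceLift (c ⬝ᵥ z) + twiceLift (u ⬝ᵥ z)) B fun x z => ?_).trans ?_
  · simp only [quadForm_add B hB, dotProduct_add, map_add]
    abel
  · rw [card_filter_mulVec_eq_zero, ZMod.card, Fintype.card_fin]
    push_cast
    rw [← pow_add, show m + (m - B.rank) = 2 * m - B.rank by have := B.rank_le_width; omega]

/-- The PAPR of the whole coset `Q + ZRM(1,m)` of a `ZMod 4`-valued quadratic form `Q` of
rank `r` is at most `2^{m-r}`: every word `f(x) = Q(x) + 2(c·x) + ε` of the coset satisfies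
`|f̂(u)|² ≤ 2^{2m - r}` for all `u`. -/
theorem stmt14 (m : ℕ) (hm : 1 ≤ m) (B : Matrix (Fin m) (Fin m) (ZMod 2))
    (hB : B.transpose = B) :
    ∀ (c : Fin m → ZMod 2) (ε : ZMod 4) (u : Fin m → ZMod 2),
      Complex.normSq
          (fourier4 (fun x => quadForm B x + 2 * ((∑ j, c j * x j).val : ZMod 4) + ε) u)
        ≤ 2 ^ (2 * m - B.rank) :=
  stmt14_general m B hB
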